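/- arXiv:1810.04206 — 6 statements merged into one kernel-verified Lean document; each statement's English description precedes it below -/
import Mathlib

section
/- Let C ⊆ ℝⁿ be a closed convex cone that is not a linear subspace, let B be a convex cone contained in the relative boundary of C, and let D = {x ∈ C° : x · u = 0 for all u ∈ B}. If B is not contained in the lineality space Lin C = C ∩ (−C), then D is contained in the relative boundary of C° but D is not contained in the lineality space Lin C° = C° ∩ (−C°). -/
open RealInnerProductSpace Pointwise

/-- The (negative) polar set of `X`. -/
def polarSet {n : ℕ} (X : Set (EuclideanSpace ℝ (Fin n))) : Set (EuclideanSpace ℝ (Fin n)) :=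
  {x | ∀ e ∈ X, ⟪x, e⟫ ≤ 0}

/-- `C` is a linear subspace (as a set). -/
def IsLinearSubspace {n : ℕ} (C : Set (EuclideanSpace ℝ (Fin n))) : Prop :=
  ∃ S : Submodule ℝ (EuclideanSpace ℝ (Fin n)), C = (S : Set (EuclideanSpace ℝ (Fin n)))

private lemma exists_shift {n : ℕ} {s : Set (EuclideanSpace ℝ (Fin n))}
    {d y : EuclideanSpace ℝ (Fin n)}
    (hd : d ∈ intrinsicInterior ℝ s) (hy : y ∈ s) :
    ∃ t : ℝ, 0 < t ∧ d + t • (d - y) ∈ s := by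
  obtain ⟨d', hd', hcoe⟩ := mem_intrinsicInterior.mp hd
  rw [mem_interior_iff_mem_nhds, Metric.mem_nhds_iff] at hd'
  obtain ⟨ε, hε, hball⟩ := hd'
  set t : ℝ := ε / (2 * (‖d - y‖ + 1)) with ht
  have hnorm : (0:ℝ) ≤ ‖d - y‖ := norm_nonneg _
  have htpos : 0 < t := by positivity
  refine ⟨t, htpos, ?_⟩
  have h1 : d ∈ affineSpan ℝ s := by rw [← hcoe]; exact d'.2
  have h2 : y ∈ affineSpan ℝ s := subset_affineSpan ℝ s hy
  have hmem : d + t • (d - y) ∈ affineSpan ℝ s := by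
    have := (affineSpan ℝ s).smul_vsub_vadd_mem t h1 h2 h1
    simpa [vsub_eq_sub, vadd_eq_add, add_comm] using this
  have hd2 : dist (⟨d + t • (d - y), hmem⟩ : affineSpan ℝ s) d' < ε := by
    rw [Subtype.dist_eq, hcoe, dist_eq_norm]
    have : d + t • (d - y) - d = t • (d - y) := by abel
    rw [this, norm_smul, Real.norm_eq_abs, abs_of_pos htpos, ht,
      div_mul_eq_mul_div, div_lt_iff₀ (by positivity)]
    nlinarith
  exact hball (Metric.mem_ball.mpr hd2)

set_option maxHeartbeats 1000000 in
theorem orthogonal_face_in_relative_boundary_of_polar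
    (n : ℕ) (C B D : Set (EuclideanSpace ℝ (Fin n)))
    (hCcl : IsClosed C) (hCconv : Convex ℝ C) (hCne : C.Nonempty)
    (hCcone : ∀ l : ℝ, 0 ≤ l → ∀ x ∈ C, l • x ∈ C)
    (hCnotsub : ¬ IsLinearSubspace C)
    (hBne : B.Nonempty) (hBconv : Convex ℝ B)
    (hBcone : ∀ l : ℝ, 0 ≤ l → ∀ x ∈ B, l • x ∈ B)
    (hBsub : B ⊆ intrinsicFrontier ℝ C)
    (hD : D = {x ∈ polarSet C | ∀ u ∈ B, ⟪x, u⟫ = 0})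
    (hBlin : ¬ B ⊆ C ∩ (-C)) :
    D ⊆ intrinsicFrontier ℝ (polarSet C) ∧
      ¬ D ⊆ polarSet C ∩ (-(polarSet C)) := by
  have hBC : B ⊆ C := (hBsub.trans (intrinsicFrontier_subset hCcl))
  -- a cone structure on C
  let K : ConvexCone ℝ (EuclideanSpace ℝ (Fin n)) :=
    { carrier := C
      smul_mem' := fun {c} hc {x} hx => hCcone c hc.le x hx
      add_mem' := by
        intro x hx y hy
        have hm : (1/2:ℝ) • x + (1/2:ℝ) • y ∈ C :=
          hCconv hx hy (by norm_num) (by norm_num) (by norm_num)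
        have := hCcone 2 (by norm_num) _ hm
        have heq : (2:ℝ) • ((1/2:ℝ) • x + (1/2:ℝ) • y) = x + y := by
          rw [smul_add, smul_smul, smul_smul]; norm_num
        rwa [heq] at this }
  have hKset : (K : Set (EuclideanSpace ℝ (Fin n))) = C := rfl
  -- the witness u ∈ B with -u ∉ C
  obtain ⟨u, huB, hulin⟩ := Set.not_subset.mp hBlin
  have huC : u ∈ C := hBC huB
  have hnuC : -u ∉ C := by
    intro h
    exact hulin ⟨huC, Set.mem_neg.mpr h⟩
  -- Part 1
  have part1 : D ⊆ intrinsicFrontier ℝ (polarSet C) := by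
    intro d hd
    rw [hD] at hd
    obtain ⟨hdP, hdB⟩ := hd
    have hdu : ⟪d, u⟫ = 0 := hdB u huB
    rw [← closure_diff_intrinsicInterior]
    refine ⟨subset_closure hdP, ?_⟩
    intro hdi
    -- every element of the polar is orthogonal to u
    have hall : ∀ y ∈ polarSet C, ⟪y, u⟫ = 0 := by
      intro y hy
      have hyu : ⟪y, u⟫ ≤ 0 := hy u huC
      obtain ⟨t, htpos, htmem⟩ := exists_shift hdi hy
      have := htmem u huC
      rw [inner_add_left, real_inner_smul_left, inner_sub_left, hdu] at this
      nlinarith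
    -- separate -u from C
    obtain ⟨y₀, hy₀C, hy₀u⟩ : ∃ y, (∀ x ∈ C, 0 ≤ ⟪x, y⟫) ∧ ⟪y, -u⟫ < 0 := by
      have h0C : (0 : EuclideanSpace ℝ (Fin n)) ∈ C := by
        obtain ⟨c, hc⟩ := hCne
        simpa using hCcone 0 le_rfl c hc
      let P : ProperCone ℝ (EuclideanSpace ℝ (Fin n)) :=
        { toSubmodule :=
            { carrier := C
              add_mem' := fun {x y} hx hy => K.add_mem hx hy
              zero_mem' := h0C
              smul_mem' := fun c x hx => by
                exact hCcone c c.2 x hx }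
          isClosed' := hCcl }
      obtain ⟨y, hy, hy'⟩ := P.hyperplane_separation' (x₀ := -u) hnuC
      exact ⟨y, hy, by rw [real_inner_comm]; exact hy'⟩
    have hny₀ : -y₀ ∈ polarSet C := by
      intro e he
      have := hy₀C e he
      rw [inner_neg_left]
      rw [real_inner_comm] at this
      linarith
    have := hall _ hny₀
    rw [inner_neg_left] at this
    rw [inner_neg_right] at hy₀u
    linarith
  refine ⟨part1, ?_⟩
  -- Part 2
  obtain ⟨b, hbint⟩ := Set.Nonempty.intrinsicInterior hBconv hBne
  have hbB : b ∈ B := intrinsicInterior_subset hbint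
  have hbC : b ∈ C := hBC hbB
  have hbni : b ∉ intrinsicInterior ℝ C := by
    have := hBsub hbB
    rw [← closure_diff_intrinsicInterior] at this
    exact this.2
  have h0C : (0 : EuclideanSpace ℝ (Fin n)) ∈ C := by
    obtain ⟨c, hc⟩ := hCne
    simpa using hCcone 0 le_rfl c hc
  set V : Submodule ℝ (EuclideanSpace ℝ (Fin n)) := Submodule.span ℝ C with hV
  set C' : Set V := ((↑) ⁻¹' C : Set V) with hC'
  have hC'conv : Convex ℝ C' := hCconv.linear_preimage V.subtype
  have hC'0 : (0 : V) ∈ C' := by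
    show ((0 : V) : EuclideanSpace ℝ (Fin n)) ∈ C
    exact h0C
  -- span of C' is everything
  have hspan : Submodule.span ℝ C' = ⊤ := by
    apply Submodule.map_injective_of_injective V.injective_subtype
    rw [Submodule.map_span, Submodule.map_subtype_top]
    have himg : V.subtype '' C' = C := by
      apply Set.image_preimage_eq_of_subset
      intro x hx
      exact ⟨⟨x, Submodule.subset_span hx⟩, rfl⟩
    rw [himg, hV]
  have haff : affineSpan ℝ C' = ⊤ := by
    rw [AffineSubspace.affineSpan_eq_top_iff_vectorSpan_eq_top_of_nonempty ℝ ↥V ↥V ⟨0, hC'0⟩]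
    refine le_antisymm le_top ?_
    rw [← hspan]
    apply Submodule.span_le.mpr
    intro x hx
    have := vsub_mem_vectorSpan ℝ hx hC'0
    simpa [vsub_eq_sub] using this
  have hint : (interior C').Nonempty :=
    (hC'conv.interior_nonempty_iff_affineSpan_eq_top).mpr haff
  obtain ⟨c₀, hc₀⟩ := hint
  have hc₀C : (c₀ : EuclideanSpace ℝ (Fin n)) ∈ C := by
    have h : c₀ ∈ C' := interior_subset hc₀
    exact h
  set b' : V := ⟨b, Submodule.subset_span hbC⟩ with hb'
  have hb'C : b' ∈ C' := hbC
  -- b' is not in the interior of C'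
  have hb'ni : b' ∉ interior C' := by
    intro h
    apply hbni
    rw [mem_interior_iff_mem_nhds, Metric.mem_nhds_iff] at h
    obtain ⟨ε, hε, hball⟩ := h
    refine mem_intrinsicInterior.mpr ⟨⟨b, subset_affineSpan ℝ C hbC⟩, ?_, rfl⟩
    rw [mem_interior_iff_mem_nhds, Metric.mem_nhds_iff]
    refine ⟨ε, hε, ?_⟩
    intro z hz
    have hzV : (z : EuclideanSpace ℝ (Fin n)) ∈ V :=
      Submodule.mem_toAffineSubspace.mp (affineSpan_le_toAffineSubspace_span z.2)
    have hzb : (⟨(z : EuclideanSpace ℝ (Fin n)), hzV⟩ : V) ∈ Metric.ball b' ε := by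
      rw [Metric.mem_ball] at hz ⊢
      rw [Subtype.dist_eq] at hz ⊢
      exact hz
    exact hball hzb
  -- separate b' from the interior of C'
  obtain ⟨f, hf⟩ :=
    geometric_hahn_banach_open_point (hC'conv.interior) isOpen_interior hb'ni
  have hfc₀ : f c₀ < f b' := hf c₀ hc₀
  -- f ≤ f b' on all of C'
  have hfle : ∀ a ∈ C', f a ≤ f b' := by
    intro a ha
    by_contra hcon
    push_neg at hcon
    have hfca : f c₀ < f a := lt_trans hfc₀ hcon
    set t₀ : ℝ := (f b' - f c₀) / (f a - f c₀) with ht₀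
    have hd1 : (0:ℝ) < f b' - f c₀ := by linarith
    have hd2 : (0:ℝ) < f a - f c₀ := by linarith
    have ht₀1 : t₀ < 1 := (div_lt_one hd2).mpr (by linarith)
    have ht₀0 : 0 < t₀ := div_pos hd1 hd2
    set t : ℝ := (t₀ + 1) / 2 with htdef
    have ht0 : 0 < t := by positivity
    have ht1 : t < 1 := by rw [htdef]; linarith
    have htt₀ : t₀ < t := by rw [htdef]; linarith
    have hmem : (1 - t) • c₀ + t • a ∈ interior C' :=
      hC'conv.combo_interior_closure_mem_interior hc₀ (subset_closure ha)
        (by linarith) ht0.le (by ring)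
    have hflt := hf _ hmem
    rw [map_add, map_smul, map_smul, smul_eq_mul, smul_eq_mul] at hflt
    have ht₀eq : t₀ * (f a - f c₀) = f b' - f c₀ := by
      rw [ht₀, div_mul_cancel₀ _ (ne_of_gt hd2)]
    nlinarith
  have hfb0 : f b' = 0 := by
    have h1 : (0:ℝ) ≤ f b' := by
      have := hfle 0 hC'0
      simpa using this
    have h2b : (2:ℝ) • b' ∈ C' := by
      show ((2:ℝ) • b' : V) ∈ C'
      have : ((2:ℝ) • b' : V) = (⟨(2:ℝ) • b, V.smul_mem 2 (Submodule.subset_span hbC)⟩ : V) := rfl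
      rw [hC']
      simp only [Set.mem_preimage, Submodule.coe_smul]
      exact hCcone 2 (by norm_num) b hbC
    have h2 := hfle _ h2b
    rw [map_smul, smul_eq_mul] at h2
    linarith
  -- the separating vector
  set v : V := (InnerProductSpace.toDual ℝ V).symm f with hv
  have hvinner : ∀ z : V, ⟪v, z⟫ = f z := fun z => InnerProductSpace.toDual_symm_apply
  set x : EuclideanSpace ℝ (Fin n) := (v : EuclideanSpace ℝ (Fin n)) with hx
  have hxinner : ∀ e, ∀ he : e ∈ C, ⟪x, e⟫ = f ⟨e, Submodule.subset_span he⟩ := by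
    intro e he
    have := hvinner ⟨e, Submodule.subset_span he⟩
    rwa [Submodule.coe_inner] at this
  have hxP : x ∈ polarSet C := by
    intro e he
    rw [hxinner e he]
    have : f b' = 0 := hfb0
    have := hfle ⟨e, Submodule.subset_span he⟩ he
    rw [hfb0] at this
    exact this
  have hxb : ⟪x, b⟫ = 0 := by
    rw [hxinner b hbC]
    exact hfb0
  have hxc₀ : ⟪x, (c₀ : EuclideanSpace ℝ (Fin n))⟫ < 0 := by
    rw [hxinner _ hc₀C]
    have : f ⟨(c₀ : EuclideanSpace ℝ (Fin n)), Submodule.subset_span hc₀C⟩ = f c₀ := rfl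
    rw [this]
    linarith
  have hxD : x ∈ D := by
    rw [hD]
    refine ⟨hxP, ?_⟩
    intro w hwB
    have h1 : ⟪x, w⟫ ≤ 0 := hxP w (hBC hwB)
    obtain ⟨t, htpos, htmem⟩ := exists_shift hbint hwB
    have h2 : ⟪x, b + t • (b - w)⟫ ≤ 0 := hxP _ (hBC htmem)
    rw [inner_add_right, real_inner_smul_right, inner_sub_right, hxb] at h2
    nlinarith
  intro hsub
  have hxmem := hsub hxD
  have hxn : -x ∈ polarSet C := Set.mem_neg.mp hxmem.2
  have := hxn _ hc₀C
  rw [inner_neg_left] at this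
  linarith
end

section
/- Let C ⊆ ℝⁿ be a closed convex cone that is not a linear subspace, let B be a convex cone contained in the relative boundary of C, and let D = {x ∈ C° : x · u = 0 for all u ∈ B}. Then there exists a nonzero vector e ∈ ℝⁿ such that the (n−1)-dimensional subspace S = {x ∈ ℝⁿ : x · e = 0} contains B, every x ∈ C satisfies x · e ≤ 0, every x ∈ D satisfies x · e ≥ 0, every x in the relative interior of C satisfies x · e < 0, and every x in the relative interior of D satisfies x · e > 0. -/
open RealInnerProductSpace Pointwise

section Aux

variable {F : Type*} [NormedAddCommGroup F] [InnerProductSpace ℝ F]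

lemma aux_affineSpan_zero {S : Set F} (h0 : (0:F) ∈ S) :
    (affineSpan ℝ S : Set F) = (Submodule.span ℝ S : Set F) := by
  conv_lhs => rw [← Set.insert_eq_of_mem h0]
  exact affineSpan_insert_zero S

lemma aux_span_inner_zero {S : Set F} {w : F} (h : ∀ x ∈ S, ⟪x, w⟫ = 0) :
    ∀ v ∈ Submodule.span ℝ S, ⟪v, w⟫ = 0 := by
  intro v hv
  induction hv using Submodule.span_induction with
  | mem x hx => exact h x hx
  | zero => simp
  | add x y _ _ hx hy => rw [inner_add_left, hx, hy, add_zero]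
  | smul a x _ hx => rw [real_inner_smul_left, hx, mul_zero]

lemma aux_relint_ball {S : Set F} {x : F} (hx : x ∈ intrinsicInterior ℝ S) :
    ∃ ε > 0, ∀ y : F, y ∈ affineSpan ℝ S → dist y x < ε → y ∈ intrinsicInterior ℝ S := by
  obtain ⟨x', hx', rfl⟩ := hx
  obtain ⟨ε, hε, hball⟩ := Metric.isOpen_iff.1 isOpen_interior x' hx'
  refine ⟨ε, hε, fun y hy hdist => ?_⟩
  refine ⟨⟨y, hy⟩, hball ?_, rfl⟩
  rwa [Metric.mem_ball, Subtype.dist_eq]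

lemma aux_relint_of_ball {S : Set F} {x : F} (hx : x ∈ affineSpan ℝ S) {ε : ℝ} (hε : 0 < ε)
    (h : ∀ y : F, y ∈ affineSpan ℝ S → dist y x < ε → y ∈ S) :
    x ∈ intrinsicInterior ℝ S := by
  refine ⟨⟨x, hx⟩, ?_, rfl⟩
  refine mem_interior.2 ⟨Metric.ball ⟨x, hx⟩ ε, ?_, Metric.isOpen_ball, Metric.mem_ball_self hε⟩
  intro y hy
  exact h y y.2 (by rwa [Metric.mem_ball, Subtype.dist_eq] at hy)

lemma aux_relint_push {S : Set F} {x c : F} (hx : x ∈ intrinsicInterior ℝ S)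
    (hc : c ∈ affineSpan ℝ S) :
    ∃ t : ℝ, 0 < t ∧ x + t • (x - c) ∈ intrinsicInterior ℝ S := by
  obtain ⟨ε, hε, h⟩ := aux_relint_ball hx
  have hxS : x ∈ affineSpan ℝ S := subset_affineSpan ℝ S (intrinsicInterior_subset hx)
  have hden : (0:ℝ) < ‖x - c‖ + 1 := by positivity
  set t := ε / (2 * (‖x - c‖ + 1)) with ht
  have htpos : 0 < t := by positivity
  refine ⟨t, htpos, h _ ?_ ?_⟩
  · have := AffineSubspace.smul_vsub_vadd_mem (affineSpan ℝ S) t hxS hc hxS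
    simpa [vsub_eq_sub, vadd_eq_add, add_comm] using this
  · have hd : dist (x + t • (x - c)) x = t * ‖x - c‖ := by
      simp [dist_eq_norm, norm_smul, abs_of_pos htpos]
    rw [hd]
    have h1 : t * (‖x - c‖ + 1) = ε / 2 := by
      rw [ht]; field_simp
    nlinarith [norm_nonneg (x - c)]

variable [CompleteSpace F]

lemma aux_proj_cone {K : Set F} (h0 : (0:F) ∈ K) (hcl : IsClosed K)
    (hconv : Convex ℝ K) (hsmul : ∀ l : ℝ, 0 ≤ l → ∀ x ∈ K, l • x ∈ K) (z : F) :
    ∃ p ∈ K, (∀ y ∈ K, ⟪z - p, y⟫ ≤ 0) ∧ ⟪z - p, p⟫ = 0 := by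
  obtain ⟨p, hpK, hmin⟩ := exists_norm_eq_iInf_of_complete_convex ⟨0, h0⟩ hcl.isComplete hconv z
  have hchar := (norm_eq_iInf_iff_real_inner_le_zero hconv hpK).1 hmin
  have h2p : (2:ℝ) • p ∈ K := hsmul 2 (by norm_num) p hpK
  have h1 : ⟪z - p, p⟫ ≤ 0 := by
    have h2 := hchar _ h2p
    have h3 : (2:ℝ) • p - p = p := by rw [two_smul]; abel
    rwa [h3] at h2
  have h2 : (0:ℝ) ≤ ⟪z - p, p⟫ := by
    have := hchar 0 h0
    rw [zero_sub, inner_neg_right] at this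
    linarith
  have heq : ⟪z - p, p⟫ = 0 := le_antisymm h1 h2
  refine ⟨p, hpK, fun y hy => ?_, heq⟩
  have expand : ⟪z - p, y⟫ = ⟪z - p, y - p⟫ + ⟪z - p, p⟫ := by
    rw [← inner_add_right, sub_add_cancel]
  rw [expand, heq, add_zero]
  exact hchar y hy

lemma aux_mem_of_dual {K : Set F} (h0 : (0:F) ∈ K) (hcl : IsClosed K)
    (hconv : Convex ℝ K) (hsmul : ∀ l : ℝ, 0 ≤ l → ∀ x ∈ K, l • x ∈ K) {w : F}
    (hw : ∀ z : F, (∀ y ∈ K, 0 ≤ ⟪z, y⟫) → ⟪z, w⟫ = 0) : w ∈ K := by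
  by_contra hwK
  obtain ⟨p, hpK, hineq, hperp⟩ := aux_proj_cone h0 hcl hconv hsmul w
  have hz : ∀ y ∈ K, 0 ≤ ⟪-(w - p), y⟫ := fun y hy => by
    rw [inner_neg_left]; linarith [hineq y hy]
  have h0' := hw _ hz
  rw [inner_neg_left, neg_eq_zero] at h0'
  have hwp : w - p ≠ 0 := sub_ne_zero.2 (by rintro rfl; exact hwK hpK)
  have hexp : ⟪w - p, w⟫ = ⟪w - p, w - p⟫ + ⟪w - p, p⟫ := by
    rw [← inner_add_right, sub_add_cancel]
  rw [h0', hperp, add_zero] at hexp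
  exact hwp (inner_self_eq_zero.1 hexp.symm)

end Aux

set_option maxHeartbeats 1000000 in
theorem separation_of_cone_and_orthogonal_face
    (n : ℕ) (C B D : Set (EuclideanSpace ℝ (Fin n)))
    (hCcl : IsClosed C) (hCconv : Convex ℝ C) (hCne : C.Nonempty)
    (hCcone : ∀ l : ℝ, 0 ≤ l → ∀ x ∈ C, l • x ∈ C)
    (hCnotsub : ¬ IsLinearSubspace C)
    (hBne : B.Nonempty) (hBconv : Convex ℝ B)
    (hBcone : ∀ l : ℝ, 0 ≤ l → ∀ x ∈ B, l • x ∈ B)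
    (hBsub : B ⊆ intrinsicFrontier ℝ C)
    (hD : D = {x ∈ polarSet C | ∀ u ∈ B, ⟪x, u⟫ = 0}) :
    ∃ e : EuclideanSpace ℝ (Fin n), e ≠ 0 ∧
      B ⊆ {x | ⟪x, e⟫ = 0} ∧
      (∀ x ∈ C, ⟪x, e⟫ ≤ 0) ∧
      (∀ x ∈ D, ⟪x, e⟫ ≥ 0) ∧
      (∀ x ∈ intrinsicInterior ℝ C, ⟪x, e⟫ < 0) ∧
      (∀ x ∈ intrinsicInterior ℝ D, ⟪x, e⟫ > 0) := by
  classical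
  obtain ⟨x₀, hx₀⟩ := hCne
  have h0C : (0 : EuclideanSpace ℝ (Fin n)) ∈ C := by simpa using hCcone 0 le_rfl x₀ hx₀
  obtain ⟨b₀', hb₀'⟩ := hBne
  have h0B : (0 : EuclideanSpace ℝ (Fin n)) ∈ B := by simpa using hBcone 0 le_rfl b₀' hb₀'
  have hBC : B ⊆ C := fun b hb => intrinsicFrontier_subset hCcl (hBsub hb)
  set L : Submodule ℝ (EuclideanSpace ℝ (Fin n)) := Submodule.span ℝ C with hLdef
  have hCL : C ⊆ (L : Set _) := Submodule.subset_span
  have hAff : (affineSpan ℝ C : Set (EuclideanSpace ℝ (Fin n))) = (L : Set _) :=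
    aux_affineSpan_zero h0C
  have hCadd : ∀ x ∈ C, ∀ y ∈ C, x + y ∈ C := by
    intro x hx y hy
    have hmid : (1/2 : ℝ) • x + (1/2 : ℝ) • y ∈ C :=
      hCconv hx hy (by norm_num) (by norm_num) (by norm_num)
    have h2 := hCcone 2 (by norm_num) _ hmid
    have heq : (2:ℝ) • ((1/2 : ℝ) • x + (1/2 : ℝ) • y) = x + y := by
      rw [smul_add, smul_smul, smul_smul]; norm_num
    rwa [heq] at h2
  have hDmem : ∀ x, x ∈ D ↔ (∀ e ∈ C, ⟪x, e⟫ ≤ 0) ∧ (∀ u ∈ B, ⟪x, u⟫ = 0) := by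
    intro x; rw [hD]; exact Set.mem_sep_iff
  have hLperpD : ∀ w : EuclideanSpace ℝ (Fin n), w ∈ Lᗮ → w ∈ D := by
    intro w hw
    rw [hDmem]
    constructor
    · intro e he
      have h := (Submodule.mem_orthogonal L w).1 hw e (hCL he)
      rw [real_inner_comm, h]
    · intro u hu
      have h := (Submodule.mem_orthogonal L w).1 hw u (hCL (hBC hu))
      rw [real_inner_comm, h]
  obtain ⟨c₀, hc₀⟩ := Set.Nonempty.intrinsicInterior hCconv ⟨x₀, hx₀⟩
  -- scaling of the intrinsic interior of a cone
  have hscale : ∀ t : ℝ, 0 < t → ∀ c ∈ intrinsicInterior ℝ C, t • c ∈ intrinsicInterior ℝ C := by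
    intro t ht c hc
    obtain ⟨ε, hε, hball⟩ := aux_relint_ball hc
    have hcL : c ∈ (L : Set _) := hCL (intrinsicInterior_subset hc)
    have hmem : t • c ∈ affineSpan ℝ C := by
      have h := L.smul_mem t hcL
      rw [← SetLike.mem_coe, hAff]; exact h
    refine aux_relint_of_ball hmem (mul_pos ht hε) ?_
    intro y hy hdist
    have hyL : y ∈ L := by rw [← SetLike.mem_coe, ← hAff]; exact hy
    have hy' : t⁻¹ • y ∈ affineSpan ℝ C := by
      have h := L.smul_mem t⁻¹ hyL
      rw [← SetLike.mem_coe, hAff]; exact h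
    have hdist' : dist (t⁻¹ • y) c < ε := by
      have heq : t⁻¹ • y - c = t⁻¹ • (y - t • c) := by
        rw [smul_sub, smul_smul, inv_mul_cancel₀ ht.ne', one_smul]
      rw [dist_eq_norm, heq, norm_smul]
      rw [dist_eq_norm] at hdist
      rw [Real.norm_eq_abs, abs_of_pos (by positivity : (0:ℝ) < t⁻¹)]
      calc t⁻¹ * ‖y - t • c‖ < t⁻¹ * (t * ε) :=
            mul_lt_mul_of_pos_left hdist (by positivity)
        _ = ε := by field_simp
    have hyC := intrinsicInterior_subset (hball _ hy' hdist')
    have h := hCcone t ht.le _ hyC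
    rwa [smul_smul, mul_inv_cancel₀ ht.ne', one_smul] at h
  -- adding a cone element to an intrinsic interior point
  have haddC : ∀ c ∈ intrinsicInterior ℝ C, ∀ x ∈ C, c + x ∈ intrinsicInterior ℝ C := by
    intro c hc x hx
    obtain ⟨ε, hε, hball⟩ := aux_relint_ball hc
    have hmem : c + x ∈ affineSpan ℝ C := by
      have h := L.add_mem (hCL (intrinsicInterior_subset hc)) (hCL hx)
      rw [← SetLike.mem_coe, hAff]; exact h
    refine aux_relint_of_ball hmem hε ?_
    intro y hy hdist
    have hyL : y ∈ L := by rw [← SetLike.mem_coe, ← hAff]; exact hy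
    have hy' : y - x ∈ affineSpan ℝ C := by
      have h := L.sub_mem hyL (hCL hx)
      rw [← SetLike.mem_coe, hAff]; exact h
    have hdist' : dist (y - x) c < ε := by
      rw [dist_eq_norm] at hdist ⊢
      have heq : y - x - c = y - (c + x) := by abel
      rw [heq]; exact hdist
    have h1 := intrinsicInterior_subset (hball _ hy' hdist')
    have h2 := hCadd _ h1 x hx
    rwa [sub_add_cancel] at h2
  -- the open set U = relint C + L^perp
  set U : Set (EuclideanSpace ℝ (Fin n)) :=
    {x | ∃ c ∈ intrinsicInterior ℝ C, ∃ w ∈ Lᗮ, x = c + w} with hUdef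
  have hUopen : IsOpen U := by
    rw [Metric.isOpen_iff]
    rintro x ⟨c, hc, w, hw, rfl⟩
    obtain ⟨ε, hε, hball⟩ := aux_relint_ball hc
    refine ⟨ε, hε, ?_⟩
    intro z hz
    obtain ⟨y, hyL, u, hu, hzdecomp⟩ := L.exists_add_mem_mem_orthogonal z
    have hperp : ⟪y - c, u - w⟫ = 0 := by
      have h1 : y - c ∈ L := L.sub_mem hyL (hCL (intrinsicInterior_subset hc))
      have h2 : u - w ∈ Lᗮ := Submodule.sub_mem _ hu hw
      exact (Submodule.mem_orthogonal L (u - w)).1 h2 _ h1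
    have hnorm : ‖y - c‖ ≤ ‖z - (c + w)‖ := by
      have heq : z - (c + w) = (y - c) + (u - w) := by rw [hzdecomp]; abel
      rw [heq]
      have hsq := norm_add_sq_real (y - c) (u - w)
      rw [hperp] at hsq
      nlinarith [norm_nonneg (y - c), norm_nonneg ((y - c) + (u - w)), norm_nonneg (u - w)]
    have hyA : y ∈ affineSpan ℝ C := by rw [← SetLike.mem_coe, hAff]; exact hyL
    have hdy : dist y c < ε := by
      rw [dist_eq_norm]
      rw [Metric.mem_ball, dist_eq_norm] at hz
      exact lt_of_le_of_lt hnorm hz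
    exact ⟨y, hball _ hyA hdy, u, hu, hzdecomp⟩
  have hUconv : Convex ℝ U := by
    rintro x ⟨c1, hc1, w1, hw1, rfl⟩ y ⟨c2, hc2, w2, hw2, rfl⟩ a b ha hb hab
    refine ⟨a • c1 + b • c2, ?_, a • w1 + b • w2,
      Submodule.add_mem _ (Submodule.smul_mem _ _ hw1) (Submodule.smul_mem _ _ hw2),
      by rw [smul_add, smul_add]; abel⟩
    rcases eq_or_lt_of_le ha with ha0 | ha0
    · have hb1 : b = 1 := by linarith
      rw [← ha0, hb1, zero_smul, one_smul, zero_add]; exact hc2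
    · rcases eq_or_lt_of_le hb with hb0 | hb0
      · have ha1 : a = 1 := by linarith
        rw [← hb0, ha1, zero_smul, one_smul, add_zero]; exact hc1
      · exact haddC _ (hscale a ha0 _ hc1) _ (hCcone b hb _ (intrinsicInterior_subset hc2))
  have hdisj : Disjoint U B := by
    rw [Set.disjoint_left]
    rintro b ⟨c, hc, w, hw, rfl⟩ hbB
    have hcL : c ∈ L := hCL (intrinsicInterior_subset hc)
    have hbL : c + w ∈ L := hCL (hBC hbB)
    have hwL : w ∈ L := by have h := L.sub_mem hbL hcL; simpa using h
    have hw0 : w = 0 := by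
      have h := (Submodule.mem_orthogonal L w).1 hw w hwL
      exact inner_self_eq_zero.1 h
    rw [hw0, add_zero] at hbB
    obtain ⟨y, hy, hyeq⟩ := hc
    obtain ⟨y', hy', hyeq'⟩ := hBsub hbB
    have hyy : y = y' := Subtype.coe_injective (hyeq.trans hyeq'.symm)
    rw [hyy] at hy
    exact hy'.2 hy
  obtain ⟨f, u, hfU, hfB⟩ := geometric_hahn_banach_open hUconv hUopen hBconv hdisj
  have hc₀U : c₀ ∈ U := ⟨c₀, hc₀, 0, Submodule.zero_mem _, by rw [add_zero]⟩
  have hu0 : u ≤ 0 := by have h := hfB 0 h0B; simpa using h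
  have hupos : 0 ≤ u := by
    by_contra h
    push_neg at h
    have hfc₀ : f c₀ < u := hfU c₀ hc₀U
    have hfc₀neg : f c₀ < 0 := lt_trans hfc₀ h
    set t : ℝ := u / (2 * f c₀) with htdef
    have ht : 0 < t := div_pos_iff.2 (Or.inr ⟨h, by linarith⟩)
    have htc₀ : t • c₀ ∈ U := ⟨t • c₀, hscale t ht _ hc₀, 0, Submodule.zero_mem _, by rw [add_zero]⟩
    have hlt := hfU _ htc₀
    rw [map_smul, smul_eq_mul] at hlt
    have heq : t * f c₀ = u / 2 := by rw [htdef]; field_simp [hfc₀neg.ne]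
    rw [heq] at hlt
    linarith
  have hu : u = 0 := le_antisymm hu0 hupos
  have hfc₀ : f c₀ < 0 := by have h := hfU c₀ hc₀U; linarith [hu ▸ h]
  have hfC : ∀ x ∈ C, f x ≤ 0 := by
    intro x hx
    by_contra h
    push_neg at h
    set t : ℝ := (1 - f c₀) / f x with htdef
    have ht0 : 0 ≤ t := div_nonneg (by linarith) h.le
    have htx : c₀ + t • x ∈ U :=
      ⟨c₀ + t • x, haddC _ hc₀ _ (hCcone t ht0 x hx), 0, Submodule.zero_mem _, by rw [add_zero]⟩
    have hlt := hfU _ htx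
    rw [map_add, map_smul, smul_eq_mul] at hlt
    have heq : t * f x = 1 - f c₀ := by rw [htdef]; field_simp
    rw [heq, hu] at hlt
    linarith
  have hfLperp : ∀ w ∈ Lᗮ, f w = 0 := by
    intro w hw
    by_contra h
    set t : ℝ := (1 - f c₀) / f w with htdef
    have htw : c₀ + t • w ∈ U := ⟨c₀, hc₀, t • w, Submodule.smul_mem _ _ hw, rfl⟩
    have hlt := hfU _ htw
    rw [map_add, map_smul, smul_eq_mul] at hlt
    have heq : t * f w = 1 - f c₀ := by rw [htdef]; field_simp
    rw [heq, hu] at hlt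
    linarith
  set e₁ : EuclideanSpace ℝ (Fin n) := (InnerProductSpace.toDual ℝ _).symm f with he₁def
  have he₁ : ∀ x, ⟪e₁, x⟫ = f x := fun x => InnerProductSpace.toDual_symm_apply
  have he₁L : e₁ ∈ L := by
    rw [← Submodule.orthogonal_orthogonal L, Submodule.mem_orthogonal]
    intro v hv
    rw [real_inner_comm, he₁]
    exact hfLperp v hv
  have he₁D : e₁ ∈ D := by
    rw [hDmem]
    refine ⟨fun e he => by rw [he₁]; exact hfC e he, fun v hv => ?_⟩
    rw [he₁]
    have h1 := hfC _ (hBC hv)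
    have h2 := hfB _ hv
    linarith [hu ▸ h2]
  have he₁0 : e₁ ≠ 0 := by
    intro h
    rw [← he₁ c₀, h, inner_zero_left] at hfc₀
    exact lt_irrefl 0 hfc₀
  -- the pointed cone K = D ∩ L
  set K : Set (EuclideanSpace ℝ (Fin n)) := D ∩ (L : Set _) with hKdef
  have hDadd : ∀ x ∈ D, ∀ y ∈ D, x + y ∈ D := by
    intro x hx y hy
    rw [hDmem] at hx hy ⊢
    exact ⟨fun e he => by rw [inner_add_left]; linarith [hx.1 e he, hy.1 e he],
           fun v hv => by rw [inner_add_left, hx.2 v hv, hy.2 v hv, add_zero]⟩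
  have hDsmul : ∀ l : ℝ, 0 ≤ l → ∀ x ∈ D, l • x ∈ D := by
    intro l hl x hx
    rw [hDmem] at hx ⊢
    exact ⟨fun e he => by
        rw [real_inner_smul_left]; exact mul_nonpos_of_nonneg_of_nonpos hl (hx.1 e he),
      fun v hv => by rw [real_inner_smul_left, hx.2 v hv, mul_zero]⟩
  have hK0 : (0 : EuclideanSpace ℝ (Fin n)) ∈ K :=
    ⟨hLperpD 0 (Submodule.zero_mem _), Submodule.zero_mem L⟩
  have hKsmul : ∀ l : ℝ, 0 ≤ l → ∀ x ∈ K, l • x ∈ K :=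
    fun l hl x hx => ⟨hDsmul l hl x hx.1, Submodule.smul_mem _ _ hx.2⟩
  have hKadd : ∀ x ∈ K, ∀ y ∈ K, x + y ∈ K :=
    fun x hx y hy => ⟨hDadd _ hx.1 _ hy.1, Submodule.add_mem _ hx.2 hy.2⟩
  have hKconv : Convex ℝ K := fun x hx y hy a b ha hb _ =>
    hKadd _ (hKsmul a ha x hx) _ (hKsmul b hb y hy)
  have hDcl : IsClosed D := by
    have hD' : D = (⋂ e ∈ C, {x : EuclideanSpace ℝ (Fin n) | ⟪x, e⟫ ≤ 0}) ∩
        ⋂ v ∈ B, {x : EuclideanSpace ℝ (Fin n) | ⟪x, v⟫ = 0} := by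
      ext x
      rw [hDmem]
      simp [Set.mem_iInter]
    rw [hD']
    exact (isClosed_biInter fun e _ =>
        isClosed_le (continuous_id.inner continuous_const) continuous_const).inter
      (isClosed_biInter fun v _ =>
        isClosed_eq (continuous_id.inner continuous_const) continuous_const)
  have hKcl : IsClosed K := hDcl.inter (Submodule.closed_of_finiteDimensional L)
  have hKpointed : ∀ w, w ∈ K → -w ∈ K → w = 0 := by
    intro w hw hw'
    have h1 := (hDmem w).1 hw.1
    have h2 := (hDmem (-w)).1 hw'.1
    have hzero : ∀ x ∈ C, ⟪x, w⟫ = 0 := by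
      intro x hx
      have ha := h1.1 x hx
      have hb := h2.1 x hx
      rw [inner_neg_left] at hb
      rw [real_inner_comm]
      linarith
    have h := aux_span_inner_zero hzero w hw.2
    exact inner_self_eq_zero.1 h
  -- the dual cone of K spans everything
  set Kd : Set (EuclideanSpace ℝ (Fin n)) := {z | ∀ y ∈ K, 0 ≤ ⟪z, y⟫} with hKddef
  have hKd0 : (0 : EuclideanSpace ℝ (Fin n)) ∈ Kd := fun y hy => by rw [inner_zero_left]
  have hKdconv : Convex ℝ Kd := by
    intro x hx y hy a b ha hb hab
    intro v hv
    rw [inner_add_left, real_inner_smul_left, real_inner_smul_left]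
    have h1 := hx v hv
    have h2 := hy v hv
    have := add_nonneg (mul_nonneg ha h1) (mul_nonneg hb h2)
    linarith
  have hKdspan : Submodule.span ℝ Kd = ⊤ := by
    by_contra h
    have hne : (Submodule.span ℝ Kd)ᗮ ≠ ⊥ := by
      rw [Ne, Submodule.orthogonal_eq_bot_iff]; exact h
    obtain ⟨w, hwmem, hw0⟩ := Submodule.exists_mem_ne_zero_of_ne_bot hne
    have hworth : ∀ z ∈ Kd, ⟪z, w⟫ = 0 := fun z hz =>
      (Submodule.mem_orthogonal _ w).1 hwmem z (Submodule.subset_span hz)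
    have hwK : w ∈ K := aux_mem_of_dual hK0 hKcl hKconv hKsmul (fun z hz => hworth z hz)
    have hwK' : -w ∈ K := aux_mem_of_dual hK0 hKcl hKconv hKsmul (fun z hz => by
      rw [inner_neg_right, hworth z hz, neg_zero])
    exact hw0 (hKpointed w hwK hwK')
  have hKdaff : affineSpan ℝ Kd = ⊤ := by
    rw [← AffineSubspace.coe_eq_univ_iff]
    rw [aux_affineSpan_zero hKd0, hKdspan]
    simp
  obtain ⟨z, hz⟩ := (Convex.interior_nonempty_iff_affineSpan_eq_top hKdconv).2 hKdaff
  have hzKd : ∀ y ∈ K, 0 ≤ ⟪z, y⟫ := interior_subset hz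
  have he₁K : e₁ ∈ K := ⟨he₁D, he₁L⟩
  have hze₁ : 0 < ⟪z, e₁⟫ := by
    obtain ⟨δ, hδ, hball⟩ := Metric.isOpen_iff.1 isOpen_interior z hz
    have hne : (0:ℝ) < ‖e₁‖ := norm_pos_iff.2 he₁0
    set s : ℝ := δ / (2 * ‖e₁‖) with hsdef
    have hs : 0 < s := by positivity
    have hsnorm : s * ‖e₁‖ = δ / 2 := by rw [hsdef]; field_simp
    have hz' : z - s • e₁ ∈ Kd := interior_subset (hball (by
      rw [Metric.mem_ball, dist_eq_norm]
      have heq : z - s • e₁ - z = -(s • e₁) := by abel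
      rw [heq, norm_neg, norm_smul, Real.norm_eq_abs, abs_of_pos hs, hsnorm]
      linarith))
    have h := hz' e₁ he₁K
    rw [inner_sub_left, real_inner_smul_left, real_inner_self_eq_norm_mul_norm] at h
    have hkey : s * (‖e₁‖ * ‖e₁‖) = δ / 2 * ‖e₁‖ := by rw [← mul_assoc, hsnorm]
    have hpos : 0 < δ / 2 * ‖e₁‖ := mul_pos (by linarith) hne
    linarith
  obtain ⟨p, hpK, hproj, hperp⟩ := aux_proj_cone hK0 hKcl hKconv hKsmul z
  have hpKd : ∀ y ∈ K, 0 ≤ ⟪p, y⟫ := by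
    intro y hy
    have h1 := hproj y hy
    rw [inner_sub_left] at h1
    linarith [hzKd y hy]
  have hpe₁ : 0 < ⟪p, e₁⟫ := by
    have h1 := hproj e₁ he₁K
    rw [inner_sub_left] at h1
    linarith
  have hp0 : p ≠ 0 := by
    intro h
    rw [h, inner_zero_left] at hpe₁
    exact lt_irrefl _ hpe₁
  have hpD : p ∈ D := hpK.1
  have hpL : p ∈ L := hpK.2
  have hpmem := (hDmem p).1 hpD
  -- D is on the nonnegative side of p
  have hDge : ∀ x ∈ D, 0 ≤ ⟪x, p⟫ := by
    intro x hx
    obtain ⟨y, hyL, w, hwperp, hxdecomp⟩ := L.exists_add_mem_mem_orthogonal x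
    have hyD : y ∈ D := by
      have heq : y = x + (-w) := by rw [hxdecomp]; exact (add_neg_cancel_right y w).symm
      rw [heq]
      exact hDadd x hx _ (hLperpD _ (Submodule.neg_mem _ hwperp))
    have hyK : y ∈ K := ⟨hyD, hyL⟩
    have hwp : ⟪w, p⟫ = 0 := by
      have h := (Submodule.mem_orthogonal L w).1 hwperp p hpL
      rw [real_inner_comm]; exact h
    have h0y : 0 ≤ ⟪y, p⟫ := by rw [real_inner_comm]; exact hpKd y hyK
    calc (0:ℝ) ≤ ⟪y, p⟫ := h0y
      _ = ⟪x, p⟫ := by rw [hxdecomp, inner_add_left, hwp, add_zero]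
  refine ⟨p, hp0, ?_, ?_, ?_, ?_, ?_⟩
  · intro x hxB
    show ⟪x, p⟫ = 0
    rw [real_inner_comm]
    exact hpmem.2 x hxB
  · intro x hx
    rw [real_inner_comm]
    exact hpmem.1 x hx
  · intro x hx
    exact hDge x hx
  · intro x hx
    have hxC := intrinsicInterior_subset hx
    have hle : ⟪x, p⟫ ≤ 0 := by rw [real_inner_comm]; exact hpmem.1 x hxC
    rcases lt_or_eq_of_le hle with h | h
    · exact h
    · exfalso
      have hall : ∀ c ∈ C, ⟪c, p⟫ = 0 := by
        intro c hc
        obtain ⟨t, ht, hmem⟩ := aux_relint_push hx (subset_affineSpan ℝ C hc)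
        have h1 : ⟪x + t • (x - c), p⟫ ≤ 0 := by
          rw [real_inner_comm]
          exact hpmem.1 _ (intrinsicInterior_subset hmem)
        rw [inner_add_left, real_inner_smul_left, inner_sub_left, h] at h1
        have hge : 0 ≤ ⟪c, p⟫ := by nlinarith
        have hle' : ⟪c, p⟫ ≤ 0 := by rw [real_inner_comm]; exact hpmem.1 c hc
        linarith
      have h2 := aux_span_inner_zero hall p hpL
      exact hp0 (inner_self_eq_zero.1 h2)
  · intro x hx
    have hge := hDge x (intrinsicInterior_subset hx)
    rcases eq_or_lt_of_le hge with h | h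
    · exfalso
      obtain ⟨t, ht, hmem⟩ := aux_relint_push hx (subset_affineSpan ℝ D hpD)
      have h1 : 0 ≤ ⟪x + t • (x - p), p⟫ := hDge _ (intrinsicInterior_subset hmem)
      rw [inner_add_left, real_inner_smul_left, inner_sub_left, ← h] at h1
      have hpple : ⟪p, p⟫ ≤ 0 := by nlinarith
      have hpp : 0 < ⟪p, p⟫ := by
        rw [real_inner_self_eq_norm_mul_norm]
        exact mul_pos (norm_pos_iff.2 hp0) (norm_pos_iff.2 hp0)
      linarith
    · exact h
end

section
/- Let E and F be nonempty closed convex sets in ℝⁿ such that E + F = ℝⁿ and for every u ∈ ℝⁿ the metric projections p_E(u) and p_F(u) are orthogonal, i.e., p_E(u) · p_F(u) = 0. Then the origin belongs to E ∩ F. -/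
/-! Let `a` be the point of `E` nearest to the origin, so that `‖a‖² ≤ ⟪a, x⟫` on `E`. For `t ≥ 0`,
`a` is still the projection on `E` of `u = -t a`, hence the projection `z` of `u` on `F` is
orthogonal to `a`; comparing `‖u - z‖ ≤ ‖u - f‖` as `t → ∞` gives `⟪a, f⟫ ≥ 0` on `F`.
Writing `-a = e + f` with `e ∈ E`, `f ∈ F` then yields `-‖a‖² ≥ ‖a‖²`, so `0 = a ∈ E`;
the roles of `E` and `F` are symmetric. -/

open RealInnerProductSpace Pointwise

/-- The orthogonal complement of a set `X`. -/
def orthComp {n : ℕ} (X : Set (EuclideanSpace ℝ (Fin n))) : Set (EuclideanSpace ℝ (Fin n)) :=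
  {x | ∀ u ∈ X, ⟪x, u⟫ = 0}

/-- `y` is the metric projection of `u` on `E`: it belongs to `E` and is nearest to `u`. -/
def IsMetricProj {n : ℕ} (E : Set (EuclideanSpace ℝ (Fin n)))
    (u y : EuclideanSpace ℝ (Fin n)) : Prop :=
  y ∈ E ∧ ∀ x ∈ E, ‖u - y‖ ≤ ‖u - x‖

variable {n : ℕ} {E F : Set (EuclideanSpace ℝ (Fin n))} {u x y : EuclideanSpace ℝ (Fin n)}

theorem nonneg_of_forall_nonneg_mul_add {c d : ℝ} (h : ∀ t : ℝ, 0 ≤ t → 0 ≤ t * c + d) :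
    0 ≤ c := by
  by_contra! hc
  have hd : 0 ≤ d := by simpa using h 0 le_rfl
  have := h ((d + 1) / -c) (div_nonneg (by linarith) (by linarith))
  rw [div_mul_eq_mul_div, div_neg, mul_div_assoc, div_self hc.ne] at this
  linarith

theorem IsClosed.exists_isMetricProj (hE : IsClosed E) (hne : E.Nonempty)
    (u : EuclideanSpace ℝ (Fin n)) :
    ∃ y, IsMetricProj E u y := by
  obtain ⟨y, hy, hdist⟩ := hE.exists_infDist_eq_dist hne u
  refine ⟨y, hy, fun x hx => ?_⟩
  simpa only [← dist_eq_norm, ← hdist] using Metric.infDist_le_dist_of_mem hx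

theorem Convex.isMetricProj_iff (hE : Convex ℝ E) :
    IsMetricProj E u y ↔ y ∈ E ∧ ∀ x ∈ E, ⟪u - y, x - y⟫ ≤ 0 := by
  refine and_congr_right fun hy => ?_
  rw [← norm_eq_iInf_iff_real_inner_le_zero hE hy]
  have : Nonempty E := ⟨⟨y, hy⟩⟩
  have hbdd : BddBelow (Set.range fun x : E => ‖u - x‖) :=
    ⟨0, Set.forall_mem_range.2 fun _ => norm_nonneg _⟩
  constructor
  · intro h
    exact le_antisymm (le_ciInf fun x => h x x.2) (ciInf_le hbdd ⟨y, hy⟩)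
  · intro h x hx
    exact h ▸ ciInf_le hbdd ⟨x, hx⟩

theorem Convex.isMetricProj_add_smul_sub (hE : Convex ℝ E) (h : IsMetricProj E u y) {s : ℝ}
    (hs : 0 ≤ s) : IsMetricProj E (y + s • (u - y)) y := by
  rw [hE.isMetricProj_iff] at h ⊢
  refine ⟨h.1, fun x hx => ?_⟩
  rw [add_sub_cancel_left, real_inner_smul_left]
  exact mul_nonpos_of_nonneg_of_nonpos hs (h.2 x hx)

theorem Convex.sq_norm_le_inner_of_isMetricProj_zero (hE : Convex ℝ E) (h : IsMetricProj E 0 y)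
    (hx : x ∈ E) : ‖y‖ ^ 2 ≤ ⟪y, x⟫ := by
  have := (hE.isMetricProj_iff.1 h).2 x hx
  rw [zero_sub, inner_neg_left, inner_sub_right, real_inner_self_eq_norm_sq] at this
  linarith

theorem inner_nonneg_of_isMetricProj_zero (hE : Convex ℝ E) (hF : IsClosed F)
    (horth : ∀ u y z, IsMetricProj E u y → IsMetricProj F u z → ⟪y, z⟫ = 0)
    (hy : IsMetricProj E 0 y) (hx : x ∈ F) : 0 ≤ ⟪y, x⟫ := by
  suffices 0 ≤ 2 * ⟪y, x⟫ by linarith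
  refine nonneg_of_forall_nonneg_mul_add (d := ‖x‖ ^ 2) fun t ht => ?_
  have hyE : IsMetricProj E (-(t • y)) y := by
    convert hE.isMetricProj_add_smul_sub hy (add_nonneg ht zero_le_one) using 1
    module
  obtain ⟨z, hz⟩ := hF.exists_isMetricProj ⟨x, hx⟩ (-(t • y))
  have hyz : ⟪y, z⟫ = 0 := horth _ _ _ hyE hz
  have hle : ‖-(t • y) - z‖ ^ 2 ≤ ‖-(t • y) - x‖ ^ 2 := by
    gcongr
    exact hz.2 x hx
  rw [norm_sub_sq_real, norm_sub_sq_real, inner_neg_left, inner_neg_left, real_inner_smul_left,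
    real_inner_smul_left, hyz] at hle
  linarith [sq_nonneg ‖z‖]

theorem zero_mem_of_add_eq_univ (hEcl : IsClosed E) (hEconv : Convex ℝ E) (hFcl : IsClosed F)
    (hsum : E + F = Set.univ)
    (horth : ∀ u y z, IsMetricProj E u y → IsMetricProj F u z → ⟪y, z⟫ = 0) :
    (0 : EuclideanSpace ℝ (Fin n)) ∈ E := by
  have hne : E.Nonempty := Set.Nonempty.of_add_left (hsum ▸ Set.univ_nonempty)
  obtain ⟨a, ha⟩ := hEcl.exists_isMetricProj hne 0
  obtain ⟨e, he, f, hf, hef⟩ := Set.mem_add.1 (hsum ▸ Set.mem_univ (-a))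
  have hae := hEconv.sq_norm_le_inner_of_isMetricProj_zero ha he
  have haf := inner_nonneg_of_isMetricProj_zero hEconv hFcl horth ha hf
  have hsplit : ⟪a, e⟫ + ⟪a, f⟫ = -‖a‖ ^ 2 := by
    rw [← inner_add_right, hef, inner_neg_right, real_inner_self_eq_norm_sq]
  have ha0 : a = 0 := by
    rw [← norm_eq_zero]
    nlinarith [sq_nonneg ‖a‖]
  exact ha0 ▸ ha.1

theorem origin_mem_of_orthogonal_projections_general
(n : ℕ) (E F : Set (EuclideanSpace ℝ (Fin n)))
    (hEcl : IsClosed E) (hEconv : Convex ℝ E)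
    (hFcl : IsClosed F) (hFconv : Convex ℝ F)
    (hsum : E + F = Set.univ)
    (horth : ∀ u y z : EuclideanSpace ℝ (Fin n),
      IsMetricProj E u y → IsMetricProj F u z → ⟪y, z⟫ = 0) :
    (0 : EuclideanSpace ℝ (Fin n)) ∈ E ∩ F :=
  ⟨zero_mem_of_add_eq_univ hEcl hEconv hFcl hsum horth,
    zero_mem_of_add_eq_univ hFcl hFconv hEcl (add_comm E F ▸ hsum)
      fun u y z hy hz => real_inner_comm y z ▸ horth u z y hz hy⟩

theorem origin_mem_of_orthogonal_projections
(n : ℕ) (E F : Set (EuclideanSpace ℝ (Fin n)))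
    (hEne : E.Nonempty) (hEcl : IsClosed E) (hEconv : Convex ℝ E)
    (hFne : F.Nonempty) (hFcl : IsClosed F) (hFconv : Convex ℝ F)
    (hsum : E + F = Set.univ)
    (horth : ∀ u y z : EuclideanSpace ℝ (Fin n),
      IsMetricProj E u y → IsMetricProj F u z → ⟪y, z⟫ = 0) :
    (0 : EuclideanSpace ℝ (Fin n)) ∈ E ∩ F :=
  origin_mem_of_orthogonal_projections_general n E F hEcl hEconv hFcl hFconv hsum horth
end

section
/- Let E and F be nonempty closed convex sets in ℝⁿ such that E + F = ℝⁿ and for every u ∈ ℝⁿ the metric projections p_E(u) and p_F(u) are orthogonal, i.e., p_E(u) · p_F(u) = 0. If at least one of the sets E and F is a linear subspace of ℝⁿ, then E and F are complementary orthogonal linear subspaces of ℝⁿ: E = F^⊥ and F = E^⊥. -/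
open RealInnerProductSpace Pointwise

section InnerProductSpace

variable {V : Type*} [NormedAddCommGroup V] [InnerProductSpace ℝ V]

theorem Submodule.inner_starProjection_self_eq_norm_sq (K : Submodule ℝ V)
    [K.HasOrthogonalProjection] (v : V) :
    ⟪K.starProjection v, v⟫ = ‖K.starProjection v‖ ^ 2 := by
  have hperp : ⟪v - K.starProjection v, K.starProjection v⟫ = 0 :=
    K.starProjection_inner_eq_zero v _ (K.starProjection_apply_mem v)
  rw [inner_sub_left, real_inner_self_eq_norm_sq, real_inner_comm] at hperp
  linarith

theorem Submodule.mem_orthogonal_of_inner_starProjection_self_eq_zero (K : Submodule ℝ V)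
    [K.HasOrthogonalProjection] {v : V} (h : ⟪K.starProjection v, v⟫ = 0) : v ∈ Kᗮ := by
  rw [K.inner_starProjection_self_eq_norm_sq, sq_eq_zero_iff, norm_eq_zero] at h
  exact K.starProjection_apply_eq_zero_iff.mp h

theorem Submodule.eq_orthogonal_of_add_eq_univ_of_subset (K : Submodule ℝ V) {F : Set V}
    (hsum : (K : Set V) + F = Set.univ) (hF : F ⊆ Kᗮ) : F = Kᗮ := by
  refine hF.antisymm fun v hv => ?_
  obtain ⟨e, he, f, hf, rfl⟩ : v ∈ (K : Set V) + F := hsum ▸ Set.mem_univ v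
  have he' : e ∈ Kᗮ := by simpa using Kᗮ.sub_mem hv (hF hf)
  simpa [inner_self_eq_zero.mp (he' e he)] using hf

end InnerProductSpace

section EuclideanSpace

variable {n : ℕ}

theorem orthComp_coe_submodule (S : Submodule ℝ (EuclideanSpace ℝ (Fin n))) :
    orthComp (S : Set (EuclideanSpace ℝ (Fin n))) = Sᗮ := by
  ext x
  simp only [orthComp, Set.mem_ofPred_eq, SetLike.mem_coe, Submodule.mem_orthogonal']

theorem isMetricProj_self {E : Set (EuclideanSpace ℝ (Fin n))} {u : EuclideanSpace ℝ (Fin n)}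
    (hu : u ∈ E) : IsMetricProj E u u :=
  ⟨hu, fun x _ => by simp⟩

theorem isMetricProj_starProjection (S : Submodule ℝ (EuclideanSpace ℝ (Fin n)))
    (u : EuclideanSpace ℝ (Fin n)) : IsMetricProj S u (S.starProjection u) := by
  refine ⟨S.starProjection_apply_mem u, fun x hx => ?_⟩
  rw [Submodule.starProjection_minimal]
  exact ciInf_le ⟨0, Set.forall_mem_range.mpr fun _ => norm_nonneg _⟩ (⟨x, hx⟩ : S)

/-- Each `z ∈ F` is its own projection on `F`, so it is orthogonal to its projection on `S`,
which forces that projection to vanish. -/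
theorem eq_orthogonal_of_isMetricProj_inner_eq_zero (S : Submodule ℝ (EuclideanSpace ℝ (Fin n)))
    {F : Set (EuclideanSpace ℝ (Fin n))} (hsum : (S : Set (EuclideanSpace ℝ (Fin n))) + F = Set.univ)
    (horth : ∀ u y z : EuclideanSpace ℝ (Fin n), IsMetricProj S u y → IsMetricProj F u z → ⟪y, z⟫ = 0) :
    F = Sᗮ :=
  S.eq_orthogonal_of_add_eq_univ_of_subset hsum fun z hz =>
    S.mem_orthogonal_of_inner_starProjection_self_eq_zero
      (horth z _ z (isMetricProj_starProjection S z) (isMetricProj_self hz))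

theorem eq_orthComp_of_isMetricProj_inner_eq_zero (S : Submodule ℝ (EuclideanSpace ℝ (Fin n)))
    {F : Set (EuclideanSpace ℝ (Fin n))} (hsum : (S : Set (EuclideanSpace ℝ (Fin n))) + F = Set.univ)
    (horth : ∀ u y z : EuclideanSpace ℝ (Fin n), IsMetricProj S u y → IsMetricProj F u z → ⟪y, z⟫ = 0) :
    (S : Set (EuclideanSpace ℝ (Fin n))) = orthComp F ∧ F = orthComp S := by
  obtain rfl := eq_orthogonal_of_isMetricProj_inner_eq_zero S hsum horth
  rw [orthComp_coe_submodule, orthComp_coe_submodule, Submodule.orthogonal_orthogonal]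
  exact ⟨rfl, rfl⟩

end EuclideanSpace

theorem complementary_subspaces_of_subspace_general
(n : ℕ) (E F : Set (EuclideanSpace ℝ (Fin n)))
    (hsum : E + F = Set.univ)
    (horth : ∀ u y z : EuclideanSpace ℝ (Fin n),
      IsMetricProj E u y → IsMetricProj F u z → ⟪y, z⟫ = 0)
    (hsub : (∃ S : Submodule ℝ (EuclideanSpace ℝ (Fin n)), E = (S : Set _)) ∨
      (∃ S : Submodule ℝ (EuclideanSpace ℝ (Fin n)), F = (S : Set _))) :
    E = orthComp F ∧ F = orthComp E := by
  rcases hsub with ⟨S, rfl⟩ | ⟨S, rfl⟩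
  · exact eq_orthComp_of_isMetricProj_inner_eq_zero S hsum horth
  · exact (eq_orthComp_of_isMetricProj_inner_eq_zero S (add_comm E _ ▸ hsum)
      fun u y z hy hz => real_inner_comm y z ▸ horth u z y hz hy).symm

theorem complementary_subspaces_of_subspace
(n : ℕ) (E F : Set (EuclideanSpace ℝ (Fin n)))
    (hEne : E.Nonempty) (hEcl : IsClosed E) (hEconv : Convex ℝ E)
    (hFne : F.Nonempty) (hFcl : IsClosed F) (hFconv : Convex ℝ F)
    (hsum : E + F = Set.univ)
    (horth : ∀ u y z : EuclideanSpace ℝ (Fin n),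
      IsMetricProj E u y → IsMetricProj F u z → ⟪y, z⟫ = 0)
    (hsub : (∃ S : Submodule ℝ (EuclideanSpace ℝ (Fin n)), E = (S : Set _)) ∨
      (∃ S : Submodule ℝ (EuclideanSpace ℝ (Fin n)), F = (S : Set _))) :
    E = orthComp F ∧ F = orthComp E :=
  complementary_subspaces_of_subspace_general n E F hsum horth hsub
end

section
/- Let E and F be nonempty convex sets in ℝⁿ such that every vector u ∈ ℝⁿ is uniquely expressible as u = y + z with y ∈ E, z ∈ F, and y · z = 0 (uniqueness meaning: if u = y₁ + z₁ = y₂ + z₂ with y₁, y₂ ∈ E, z₁, z₂ ∈ F, y₁ · z₁ = 0 and y₂ · z₂ = 0, then y₁ = y₂ and z₁ = z₂). Then E ∩ F = {0}; in particular, the origin belongs to both E and F. -/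
open RealInnerProductSpace Pointwise

section OrthogonalDecomposition

variable {V : Type*} [NormedAddCommGroup V] [InnerProductSpace ℝ V]

theorem eq_zero_of_inner_eq_zero_of_add_eq_zero {y z : V} (hyz : ⟪y, z⟫ = 0)
    (hsum : y + z = 0) : y = 0 ∧ z = 0 := by
  have hz : z = -y := eq_neg_of_add_eq_zero_right hsum
  have hy : y = 0 := by
    rwa [hz, inner_neg_right, neg_eq_zero, inner_self_eq_zero] at hyz
  exact ⟨hy, by rw [hz, hy, neg_zero]⟩

theorem zero_mem_of_orthogonal_decomposition_zero {E F : Set V}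
    (h : ∃ y ∈ E, ∃ z ∈ F, ⟪y, z⟫ = 0 ∧ (0 : V) = y + z) : (0 : V) ∈ E ∧ (0 : V) ∈ F := by
  obtain ⟨y, hy, z, hz, hyz, hsum⟩ := h
  obtain ⟨rfl, rfl⟩ := eq_zero_of_inner_eq_zero_of_add_eq_zero hyz hsum.symm
  exact ⟨hy, hz⟩

/-- A common point `x` has the two orthogonal decompositions `x + 0` and `0 + x`. -/
theorem inter_subset_zero_of_unique_orthogonal_decomposition {E F : Set V}
    (h0E : (0 : V) ∈ E) (h0F : (0 : V) ∈ F)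
    (huniq : ∀ u y₁ z₁ y₂ z₂ : V, y₁ ∈ E → z₁ ∈ F → y₂ ∈ E → z₂ ∈ F →
      ⟪y₁, z₁⟫ = 0 → ⟪y₂, z₂⟫ = 0 → u = y₁ + z₁ → u = y₂ + z₂ → y₁ = y₂ ∧ z₁ = z₂) :
    E ∩ F ⊆ {0} := fun x ⟨hxE, hxF⟩ =>
  (huniq x x 0 0 x hxE h0F h0E hxF (inner_zero_right x) (inner_zero_left x)
    (add_zero x).symm (zero_add x).symm).1

end OrthogonalDecomposition

theorem inter_eq_zero_of_unique_orthogonal_decomposition_general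
    (n : ℕ) (E F : Set (EuclideanSpace ℝ (Fin n)))
(hex : ∀ u : EuclideanSpace ℝ (Fin n), ∃ y ∈ E, ∃ z ∈ F, ⟪y, z⟫ = 0 ∧ u = y + z)
    (huniq : ∀ u y₁ z₁ y₂ z₂ : EuclideanSpace ℝ (Fin n),
      y₁ ∈ E → z₁ ∈ F → y₂ ∈ E → z₂ ∈ F →
      ⟪y₁, z₁⟫ = 0 → ⟪y₂, z₂⟫ = 0 →
      u = y₁ + z₁ → u = y₂ + z₂ → y₁ = y₂ ∧ z₁ = z₂) :
    E ∩ F = {0} := by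
  obtain ⟨h0E, h0F⟩ := zero_mem_of_orthogonal_decomposition_zero (hex 0)
  exact (inter_subset_zero_of_unique_orthogonal_decomposition h0E h0F huniq).antisymm
    (Set.singleton_subset_iff.2 ⟨h0E, h0F⟩)

theorem inter_eq_zero_of_unique_orthogonal_decomposition
    (n : ℕ) (E F : Set (EuclideanSpace ℝ (Fin n)))
    (hEne : E.Nonempty) (hEconv : Convex ℝ E)
    (hFne : F.Nonempty) (hFconv : Convex ℝ F)
(hex : ∀ u : EuclideanSpace ℝ (Fin n), ∃ y ∈ E, ∃ z ∈ F, ⟪y, z⟫ = 0 ∧ u = y + z)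
    (huniq : ∀ u y₁ z₁ y₂ z₂ : EuclideanSpace ℝ (Fin n),
      y₁ ∈ E → z₁ ∈ F → y₂ ∈ E → z₂ ∈ F →
      ⟪y₁, z₁⟫ = 0 → ⟪y₂, z₂⟫ = 0 →
      u = y₁ + z₁ → u = y₂ + z₂ → y₁ = y₂ ∧ z₁ = z₂) :
    E ∩ F = {0} :=
  inter_eq_zero_of_unique_orthogonal_decomposition_general n E F hex huniq
end

section
/- Let E and F be nonempty convex sets in ℝⁿ, with E ≠ ℝⁿ and F ≠ ℝⁿ, such that every vector u ∈ ℝⁿ is uniquely expressible as u = y + z with y ∈ E, z ∈ F, and y · z = 0 (uniqueness meaning: if u = y₁ + z₁ = y₂ + z₂ with y₁, y₂ ∈ E, z₁, z₂ ∈ F, y₁ · z₁ = 0 and y₂ · z₂ = 0, then y₁ = y₂ and z₁ = z₂). Then E° ⊆ F and F° ⊆ E. -/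
open RealInnerProductSpace Pointwise

/-! If `x = y + z` with `y ∈ E`, `z ∈ F` and `y ⟂ z`, then `⟪x, y⟫ = ‖y‖²`; for `x` in the polar
of `E` this is `≤ 0`, so `y = 0` and `x = z ∈ F`. -/

theorem eq_zero_of_inner_add_self_nonpos {V : Type*} [NormedAddCommGroup V]
    [InnerProductSpace ℝ V] {y z : V} (hyz : ⟪y, z⟫ = 0) (h : ⟪y + z, y⟫ ≤ 0) : y = 0 := by
  have hsum : ⟪y + z, y⟫ = ⟪y, y⟫ := by
    rw [inner_add_left, real_inner_comm y z, hyz, add_zero]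
  exact real_inner_self_nonpos.mp (hsum ▸ h)

theorem polarSet_subset_of_forall_exists_orthogonal_add {n : ℕ}
    {E F : Set (EuclideanSpace ℝ (Fin n))}
    (hex : ∀ u : EuclideanSpace ℝ (Fin n), ∃ y ∈ E, ∃ z ∈ F, ⟪y, z⟫ = 0 ∧ u = y + z) :
    polarSet E ⊆ F := by
  intro x hx
  obtain ⟨y, hy, z, hz, hyz, rfl⟩ := hex x
  rw [eq_zero_of_inner_add_self_nonpos hyz (hx y hy), zero_add]
  exact hz

theorem polar_subset_of_unique_orthogonal_decomposition_general
    (n : ℕ) (E F : Set (EuclideanSpace ℝ (Fin n)))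
(hex : ∀ u : EuclideanSpace ℝ (Fin n), ∃ y ∈ E, ∃ z ∈ F, ⟪y, z⟫ = 0 ∧ u = y + z) :
    polarSet E ⊆ F ∧ polarSet F ⊆ E := by
  refine ⟨polarSet_subset_of_forall_exists_orthogonal_add hex,
    polarSet_subset_of_forall_exists_orthogonal_add fun u => ?_⟩
  obtain ⟨y, hy, z, hz, hyz, hu⟩ := hex u
  exact ⟨z, hz, y, hy, real_inner_comm y z ▸ hyz, hu.trans (add_comm y z)⟩

theorem polar_subset_of_unique_orthogonal_decomposition
    (n : ℕ) (E F : Set (EuclideanSpace ℝ (Fin n)))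
    (hEne : E.Nonempty) (hEconv : Convex ℝ E)
    (hFne : F.Nonempty) (hFconv : Convex ℝ F)
    (hEuniv : E ≠ Set.univ) (hFuniv : F ≠ Set.univ)
(hex : ∀ u : EuclideanSpace ℝ (Fin n), ∃ y ∈ E, ∃ z ∈ F, ⟪y, z⟫ = 0 ∧ u = y + z)
    (huniq : ∀ u y₁ z₁ y₂ z₂ : EuclideanSpace ℝ (Fin n),
      y₁ ∈ E → z₁ ∈ F → y₂ ∈ E → z₂ ∈ F →
      ⟪y₁, z₁⟫ = 0 → ⟪y₂, z₂⟫ = 0 →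
      u = y₁ + z₁ → u = y₂ + z₂ → y₁ = y₂ ∧ z₁ = z₂) :
    polarSet E ⊆ F ∧ polarSet F ⊆ E :=
  polar_subset_of_unique_orthogonal_decomposition_general n E F hex
end
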